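/- arXiv:2304.04826 — 4 statements merged into one kernel-verified Lean document; each statement's English description precedes it below -/
import Mathlib

section
/- For CCGs Z = {G_z·ξ + c_z : A_z·ξ = b_z, ξ ∈ C_z} ⊆ ℝⁿ and Y = {G_y·η + c_y : A_y·η = b_y, η ∈ C_y} ⊆ ℝ^m, and matrix R ∈ ℝ^{m×n}, the generalized intersection Z ∩_R Y := {z ∈ Z : R·z ∈ Y} equals the CCG {G_z·ξ + c_z : A_z·ξ = b_z, A_y·η = b_y, R·G_z·ξ − G_y·η = c_y − R·c_z, (ξ,η) ∈ C_z × C_y}. -/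
open Matrix

theorem Matrix.mulVec_affine_eq_affine_iff {R : Type*} [CommRing R]
    {l m n p : Type*} [Fintype m] [Fintype n] [Fintype p]
    (A : Matrix l m R) (G : Matrix m n R) (c : m → R) (H : Matrix l p R) (d : l → R)
    (ξ : n → R) (η : p → R) :
    A *ᵥ (G *ᵥ ξ + c) = H *ᵥ η + d ↔ (A * G) *ᵥ ξ - H *ᵥ η = d - A *ᵥ c := by
  rw [sub_eq_sub_iff_add_eq_add, mulVec_add, mulVec_mulVec, add_comm d]

theorem ccg_generalized_intersection (n ngz ncz m ngy ncy : ℕ)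
    (Gz : Matrix (Fin n) (Fin ngz) ℝ) (cz : Fin n → ℝ)
    (Az : Matrix (Fin ncz) (Fin ngz) ℝ) (bz : Fin ncz → ℝ)
    (Cz : Set (Fin ngz → ℝ))
    (Gy : Matrix (Fin m) (Fin ngy) ℝ) (cy : Fin m → ℝ)
    (Ay : Matrix (Fin ncy) (Fin ngy) ℝ) (by_ : Fin ncy → ℝ)
    (Cy : Set (Fin ngy → ℝ))
    (R : Matrix (Fin m) (Fin n) ℝ) :
    {z ∈ {x : Fin n → ℝ | ∃ ξ, Az.mulVec ξ = bz ∧ ξ ∈ Cz ∧ x = Gz.mulVec ξ + cz} |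
        R.mulVec z ∈ {y : Fin m → ℝ | ∃ η, Ay.mulVec η = by_ ∧ η ∈ Cy ∧ y = Gy.mulVec η + cy}}
      = {x : Fin n → ℝ | ∃ ξ η, Az.mulVec ξ = bz ∧ Ay.mulVec η = by_ ∧
          (R * Gz).mulVec ξ - Gy.mulVec η = cy - R.mulVec cz ∧
          ξ ∈ Cz ∧ η ∈ Cy ∧ x = Gz.mulVec ξ + cz} := by
  ext x
  constructor
  · rintro ⟨⟨ξ, hAz, hCz, rfl⟩, η, hAy, hCy, hRz⟩
    exact ⟨ξ, η, hAz, hAy, (mulVec_affine_eq_affine_iff ..).1 hRz, hCz, hCy, rfl⟩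
  · rintro ⟨ξ, η, hAz, hAy, hRz, hCz, hCy, rfl⟩
    exact ⟨⟨ξ, hAz, hCz, rfl⟩, η, hAy, hCy, (mulVec_affine_eq_affine_iff ..).2 hRz⟩
end

section
/- Let X = {G_x·ξ + c_x : A_x·ξ = b_x, ‖ξ‖_x ≤ 1} and Y = {G_y·η + c_y : A_y·η = b_y, ‖η‖_y ≤ 1} be nonempty CCGs in ℝⁿ whose constraint sets are unit balls of norms ‖·‖_x and ‖·‖_y. Then the convex hull of X ∪ Y equals the set {G_x·ξ + λ·c_x + G_y·η + (1−λ)·c_y : λ ∈ [0,1], A_x·ξ = λ·b_x, A_y·η = (1−λ)·b_y, ‖ξ‖_x ≤ λ, ‖η‖_y ≤ 1−λ}. -/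
/-!
Homogenize each constraint set: `(t, ξ)` with `A ξ = t • b` and `p ξ ≤ t` form a pointed convex
cone, whose slice at `t = 1` is the constraint set itself. For `t > 0` the slice at height `t` is
the constraint set scaled by `t`, and definiteness of `p` makes the slice at `t = 0` equal to `{0}`.
Hence a point of the right-hand side with weight `t ∈ (0, 1)` is the convex combination
`t • x + (1 - t) • y` of a point `x ∈ X` and a point `y ∈ Y`, while the weights `0` and `1` give the
points of `Y` and `X`; conversely, convexity of the cones makes the right-hand side convex.
-/

open Set

section Homogenization

variable {V F : Type*} [AddCommGroup V] [Module ℝ V] [AddCommGroup F] [Module ℝ F]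

def homogenization (p : Seminorm ℝ V) (A : V →ₗ[ℝ] F) (b : F) : PointedCone ℝ (ℝ × V) where
  carrier := {x | A x.2 = x.1 • b ∧ p x.2 ≤ x.1}
  zero_mem' := by simp
  add_mem' := by
    rintro ⟨s, ξ⟩ ⟨t, η⟩ ⟨hAξ, hpξ⟩ ⟨hAη, hpη⟩
    exact ⟨by simp [hAξ, hAη, add_smul], (map_add_le_add p ξ η).trans (add_le_add hpξ hpη)⟩
  smul_mem' := by
    rintro ⟨c, hc⟩ ⟨t, ξ⟩ ⟨hAξ, hpξ⟩
    refine ⟨by simp [hAξ, smul_smul], ?_⟩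
    simpa [map_smul_eq_mul, abs_of_nonneg hc] using mul_le_mul_of_nonneg_left hpξ hc

variable {p : Seminorm ℝ V} {A : V →ₗ[ℝ] F} {b : F}

@[simp]
theorem mem_homogenization {t : ℝ} {ξ : V} :
    (t, ξ) ∈ homogenization p A b ↔ A ξ = t • b ∧ p ξ ≤ t :=
  Iff.rfl

theorem one_inv_smul_mem_homogenization {t : ℝ} {ξ : V} (ht : 0 < t)
    (h : (t, ξ) ∈ homogenization p A b) : (1, t⁻¹ • ξ) ∈ homogenization p A b := by
  simpa [inv_mul_cancel₀ ht.ne'] using (homogenization p A b).smul_mem (inv_nonneg.2 ht.le) h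

theorem eq_zero_of_zero_mem_homogenization (hp : ∀ ξ, p ξ = 0 → ξ = 0) {ξ : V}
    (h : (0, ξ) ∈ homogenization p A b) : ξ = 0 :=
  hp ξ (le_antisymm h.2 (apply_nonneg p ξ))

end Homogenization

section ConvexHull

variable {V F W H E : Type*} [AddCommGroup V] [Module ℝ V] [AddCommGroup F] [Module ℝ F]
  [AddCommGroup W] [Module ℝ W] [AddCommGroup H] [Module ℝ H] [AddCommGroup E] [Module ℝ E]

def ccg (p : Seminorm ℝ V) (A : V →ₗ[ℝ] F) (b : F) (G : V →ₗ[ℝ] E) (c : E) : Set E :=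
  {x | ∃ ξ, A ξ = b ∧ p ξ ≤ 1 ∧ x = G ξ + c}

theorem exists_mem_ccg_smul_eq_of_mem_homogenization {p : Seminorm ℝ V} {A : V →ₗ[ℝ] F} {b : F}
    (G : V →ₗ[ℝ] E) (c : E) {t : ℝ} {ξ : V} (ht : 0 < t) (h : (t, ξ) ∈ homogenization p A b) :
    ∃ x ∈ ccg p A b G c, G ξ + t • c = t • x := by
  obtain ⟨hA, hp⟩ := mem_homogenization.1 (one_inv_smul_mem_homogenization ht h)
  refine ⟨G (t⁻¹ • ξ) + c, ⟨t⁻¹ • ξ, by simpa using hA, hp, rfl⟩, ?_⟩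
  rw [smul_add, map_smul, smul_smul, mul_inv_cancel₀ ht.ne', one_smul]

variable (p : Seminorm ℝ V) (A : V →ₗ[ℝ] F) (b : F) (G : V →ₗ[ℝ] E) (c : E)
  (q : Seminorm ℝ W) (A' : W →ₗ[ℝ] H) (b' : H) (G' : W →ₗ[ℝ] E) (c' : E)

def ccgHullParam : Set E :=
  {z | ∃ t ∈ Icc (0 : ℝ) 1, ∃ ξ η, A ξ = t • b ∧ A' η = (1 - t) • b' ∧
    p ξ ≤ t ∧ q η ≤ 1 - t ∧ z = G ξ + t • c + G' η + (1 - t) • c'}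

theorem union_ccg_subset_ccgHullParam :
    ccg p A b G c ∪ ccg q A' b' G' c' ⊆ ccgHullParam p A b G c q A' b' G' c' := by
  rintro z (⟨ξ, hAξ, hpξ, rfl⟩ | ⟨η, hAη, hqη, rfl⟩)
  · exact ⟨1, right_mem_Icc.2 zero_le_one, ξ, 0, by simpa using hAξ, by simp, hpξ, by simp,
      by simp⟩
  · exact ⟨0, left_mem_Icc.2 zero_le_one, 0, η, by simp, by simpa using hAη, by simp,
      by simpa using hqη, by simp⟩

theorem convex_ccgHullParam : Convex ℝ (ccgHullParam p A b G c q A' b' G' c') := by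
  rintro _ ⟨t₁, ht₁, ξ₁, η₁, hAξ₁, hAη₁, hpξ₁, hqη₁, rfl⟩
    _ ⟨t₂, ht₂, ξ₂, η₂, hAξ₂, hAη₂, hpξ₂, hqη₂, rfl⟩ a a' ha ha' haa'
  obtain rfl : a' = 1 - a := by linarith
  have hξ := (homogenization p A b).convex (mem_homogenization.2 ⟨hAξ₁, hpξ₁⟩)
    (mem_homogenization.2 ⟨hAξ₂, hpξ₂⟩) ha ha' haa'
  have hη := (homogenization q A' b').convex (mem_homogenization.2 ⟨hAη₁, hqη₁⟩)
    (mem_homogenization.2 ⟨hAη₂, hqη₂⟩) ha ha' haa'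
  have h_weight : a * (1 - t₁) + (1 - a) * (1 - t₂) = 1 - (a * t₁ + (1 - a) * t₂) := by ring
  simp only [Prod.smul_mk, Prod.mk_add_mk, smul_eq_mul, h_weight] at hξ hη
  refine ⟨a * t₁ + (1 - a) * t₂, (convex_Icc 0 1) ht₁ ht₂ ha ha' haa', _, _, hξ.1, hη.1,
    hξ.2, hη.2, ?_⟩
  simp only [map_add, map_smul]
  module

theorem ccgHullParam_subset_convexHull (hp : ∀ ξ, p ξ = 0 → ξ = 0)
    (hq : ∀ η, q η = 0 → η = 0) :
    ccgHullParam p A b G c q A' b' G' c' ⊆ convexHull ℝ (ccg p A b G c ∪ ccg q A' b' G' c') := by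
  rintro _ ⟨t, ht, ξ, η, hAξ, hAη, hpξ, hqη, rfl⟩
  have hξ : (t, ξ) ∈ homogenization p A b := ⟨hAξ, hpξ⟩
  have hη : (1 - t, η) ∈ homogenization q A' b' := ⟨hAη, hqη⟩
  have hsub := subset_convexHull ℝ (ccg p A b G c ∪ ccg q A' b' G' c')
  rcases ht.1.eq_or_lt with rfl | ht₀
  · obtain rfl := eq_zero_of_zero_mem_homogenization hp hξ
    exact hsub (Or.inr ⟨η, by simpa using hAη, by simpa using hqη, by simp⟩)
  rcases ht.2.eq_or_lt with rfl | ht₁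
  · obtain rfl := eq_zero_of_zero_mem_homogenization hq (by rwa [sub_self] at hη)
    exact hsub (Or.inl ⟨ξ, by simpa using hAξ, hpξ, by simp⟩)
  obtain ⟨x, hx, hxξ⟩ := exists_mem_ccg_smul_eq_of_mem_homogenization G c ht₀ hξ
  obtain ⟨y, hy, hyη⟩ := exists_mem_ccg_smul_eq_of_mem_homogenization G' c' (sub_pos.2 ht₁) hη
  rw [add_assoc, hyη, hxξ]
  exact convex_convexHull ℝ _ (hsub (Or.inl hx)) (hsub (Or.inr hy)) ht.1 (sub_nonneg.2 ht.2)
    (add_sub_cancel t 1)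

theorem convexHull_union_ccg (hp : ∀ ξ, p ξ = 0 → ξ = 0) (hq : ∀ η, q η = 0 → η = 0) :
    convexHull ℝ (ccg p A b G c ∪ ccg q A' b' G' c') = ccgHullParam p A b G c q A' b' G' c' :=
  (convexHull_min (union_ccg_subset_ccgHullParam ..) (convex_ccgHullParam ..)).antisymm
    (ccgHullParam_subset_convexHull p A b G c q A' b' G' c' hp hq)

end ConvexHull

theorem ccg_cvxHull_param_general (n ngx ncx ngy ncy : ℕ)
    (Nx : (Fin ngx → ℝ) → ℝ) (Ny : (Fin ngy → ℝ) → ℝ)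
    (hNx₁ : ∀ x y, Nx (x + y) ≤ Nx x + Nx y)
    (hNx₂ : ∀ (a : ℝ) x, Nx (a • x) = |a| * Nx x)
    (hNx₃ : ∀ x, Nx x = 0 → x = 0)
    (hNy₁ : ∀ x y, Ny (x + y) ≤ Ny x + Ny y)
    (hNy₂ : ∀ (a : ℝ) x, Ny (a • x) = |a| * Ny x)
    (hNy₃ : ∀ x, Ny x = 0 → x = 0)
    (Gx : Matrix (Fin n) (Fin ngx) ℝ) (cx : Fin n → ℝ)
    (Ax : Matrix (Fin ncx) (Fin ngx) ℝ) (bx : Fin ncx → ℝ)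
    (Gy : Matrix (Fin n) (Fin ngy) ℝ) (cy : Fin n → ℝ)
    (Ay : Matrix (Fin ncy) (Fin ngy) ℝ) (by_ : Fin ncy → ℝ)
    (X Y : Set (Fin n → ℝ))
    (hX : X = {x | ∃ ξ, Ax.mulVec ξ = bx ∧ Nx ξ ≤ 1 ∧ x = Gx.mulVec ξ + cx})
    (hY : Y = {y | ∃ η, Ay.mulVec η = by_ ∧ Ny η ≤ 1 ∧ y = Gy.mulVec η + cy}) :
    convexHull ℝ (X ∪ Y) =
      {z | ∃ lam ∈ Icc (0:ℝ) 1, ∃ ξ η,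
        Ax.mulVec ξ = lam • bx ∧ Ay.mulVec η = (1 - lam) • by_ ∧
        Nx ξ ≤ lam ∧ Ny η ≤ 1 - lam ∧
        z = Gx.mulVec ξ + lam • cx + Gy.mulVec η + (1 - lam) • cy} := by
  subst hX hY
  exact convexHull_union_ccg (Seminorm.of Nx hNx₁ hNx₂) Ax.mulVecLin bx Gx.mulVecLin cx
    (Seminorm.of Ny hNy₁ hNy₂) Ay.mulVecLin by_ Gy.mulVecLin cy hNx₃ hNy₃

theorem ccg_cvxHull_param (n ngx ncx ngy ncy : ℕ)
    (Nx : (Fin ngx → ℝ) → ℝ) (Ny : (Fin ngy → ℝ) → ℝ)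
    (hNx₁ : ∀ x y, Nx (x + y) ≤ Nx x + Nx y)
    (hNx₂ : ∀ (a : ℝ) x, Nx (a • x) = |a| * Nx x)
    (hNx₃ : ∀ x, Nx x = 0 → x = 0)
    (hNy₁ : ∀ x y, Ny (x + y) ≤ Ny x + Ny y)
    (hNy₂ : ∀ (a : ℝ) x, Ny (a • x) = |a| * Ny x)
    (hNy₃ : ∀ x, Ny x = 0 → x = 0)
    (Gx : Matrix (Fin n) (Fin ngx) ℝ) (cx : Fin n → ℝ)
    (Ax : Matrix (Fin ncx) (Fin ngx) ℝ) (bx : Fin ncx → ℝ)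
    (Gy : Matrix (Fin n) (Fin ngy) ℝ) (cy : Fin n → ℝ)
    (Ay : Matrix (Fin ncy) (Fin ngy) ℝ) (by_ : Fin ncy → ℝ)
    (X Y : Set (Fin n → ℝ))
    (hX : X = {x | ∃ ξ, Ax.mulVec ξ = bx ∧ Nx ξ ≤ 1 ∧ x = Gx.mulVec ξ + cx})
    (hY : Y = {y | ∃ η, Ay.mulVec η = by_ ∧ Ny η ≤ 1 ∧ y = Gy.mulVec η + cy})
    (hXne : X.Nonempty) (hYne : Y.Nonempty) :
    convexHull ℝ (X ∪ Y) =
      {z | ∃ lam ∈ Icc (0:ℝ) 1, ∃ ξ η,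
        Ax.mulVec ξ = lam • bx ∧ Ay.mulVec η = (1 - lam) • by_ ∧
        Nx ξ ≤ lam ∧ Ny η ≤ 1 - lam ∧
        z = Gx.mulVec ξ + lam • cx + Gy.mulVec η + (1 - lam) • cy} :=
  ccg_cvxHull_param_general n ngx ncx ngy ncy Nx Ny hNx₁ hNx₂ hNx₃ hNy₁ hNy₂ hNy₃ Gx cx Ax bx Gy cy
    Ay by_ X Y hX hY
end

section
/- Let X = {G_x·ξ + c_x : A_x·ξ = b_x, ‖ξ‖_x ≤ 1} and Y = {G_y·η + c_y : A_y·η = b_y, ‖η‖_y ≤ 1} be nonempty CCGs in ℝⁿ. After the substitution ξ_λ = λ − 1/2, the convex hull of X ∪ Y equals the set Z_h = {G_x·ξ + G_y·η + (c_x − c_y)·ξ_λ + (c_x + c_y)/2 : A_x·ξ − b_x·ξ_λ = b_x/2, A_y·η + b_y·ξ_λ = b_y/2, ‖ξ‖_x ≤ 1/2 + ξ_λ, ‖η‖_y ≤ 1/2 − ξ_λ, ξ_λ ∈ ℝ}. -/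
/-!
The constraints of `Z_h` are the CCG constraints of `X` and `Y` homogenized by the weights
`λ = 1/2 + ξ_λ` and `1 - λ`. For a seminorm `N`, the pairs `(ξ, t)` with `A ξ = t b` and `N ξ ≤ t`
form a convex cone whose slice at height `t > 0` is `t` times the slice at height `1`, and whose
slice at height `0` is `{0}` when `N` is definite. Hence `Z_h` is the union over `λ ∈ [0, 1]` of
`λ X + (1 - λ) Y`, with `0 X` read as `{0}`: this is exactly the convex hull of `X ∪ Y`.
-/

open Set Matrix
open scoped Pointwise

namespace CCG

section Slice

variable {ι κ m : Type*} [Fintype ι]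

def coneSlice (G : Matrix m ι ℝ) (c : m → ℝ) (A : Matrix κ ι ℝ) (b : κ → ℝ)
    (N : Seminorm ℝ (ι → ℝ)) (t : ℝ) : Set (m → ℝ) :=
  {z | ∃ ξ, A *ᵥ ξ = t • b ∧ N ξ ≤ t ∧ z = G *ᵥ ξ + t • c}

variable {G : Matrix m ι ℝ} {c : m → ℝ} {A : Matrix κ ι ℝ} {b : κ → ℝ}
  {N : Seminorm ℝ (ι → ℝ)} {a a' s t t' : ℝ} {z z' w : m → ℝ}

theorem coneSlice_one :
    coneSlice G c A b N 1 = {x | ∃ ξ, A *ᵥ ξ = b ∧ N ξ ≤ 1 ∧ x = G *ᵥ ξ + c} := by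
  simp only [coneSlice, one_smul]

theorem nonneg_of_mem_coneSlice (hz : z ∈ coneSlice G c A b N t) : 0 ≤ t := by
  obtain ⟨ξ, -, hξ, -⟩ := hz
  exact (apply_nonneg N ξ).trans hξ

theorem add_mem_coneSlice (hz : z ∈ coneSlice G c A b N s) (hw : w ∈ coneSlice G c A b N t) :
    z + w ∈ coneSlice G c A b N (s + t) := by
  obtain ⟨ξ, hAξ, hNξ, rfl⟩ := hz
  obtain ⟨η, hAη, hNη, rfl⟩ := hw
  refine ⟨ξ + η, ?_, (map_add_le_add N ξ η).trans (add_le_add hNξ hNη), ?_⟩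
  · rw [mulVec_add, hAξ, hAη, add_smul]
  · rw [mulVec_add, add_smul]
    abel

theorem smul_mem_coneSlice (ha : 0 ≤ a) (hz : z ∈ coneSlice G c A b N t) :
    a • z ∈ coneSlice G c A b N (a * t) := by
  obtain ⟨ξ, hAξ, hNξ, rfl⟩ := hz
  refine ⟨a • ξ, ?_, ?_, ?_⟩
  · rw [mulVec_smul, hAξ, smul_smul]
  · rw [map_smul_eq_mul, Real.norm_of_nonneg ha]
    exact mul_le_mul_of_nonneg_left hNξ ha
  · rw [mulVec_smul, smul_add, smul_smul]

theorem combo_mem_coneSlice (ha : 0 ≤ a) (ha' : 0 ≤ a')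
    (hz : z ∈ coneSlice G c A b N t) (hz' : z' ∈ coneSlice G c A b N t') :
    a • z + a' • z' ∈ coneSlice G c A b N (a * t + a' * t') :=
  add_mem_coneSlice (smul_mem_coneSlice ha hz) (smul_mem_coneSlice ha' hz')

theorem inv_smul_mem_coneSlice_one (ht : 0 < t) (hz : z ∈ coneSlice G c A b N t) :
    t⁻¹ • z ∈ coneSlice G c A b N 1 := by
  simpa [inv_mul_cancel₀ ht.ne'] using smul_mem_coneSlice (inv_nonneg.2 ht.le) hz

theorem eq_zero_of_mem_coneSlice_zero (hN : ∀ ξ, N ξ = 0 → ξ = 0)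
    (hz : z ∈ coneSlice G c A b N 0) : z = 0 := by
  obtain ⟨ξ, -, hNξ, rfl⟩ := hz
  rw [hN ξ (hNξ.antisymm (apply_nonneg N ξ))]
  simp

theorem zero_mem_coneSlice_zero : (0 : m → ℝ) ∈ coneSlice G c A b N 0 :=
  ⟨0, by simp⟩

end Slice

section Hull

variable {ι κ ι' κ' m : Type*} [Fintype ι] [Fintype ι']
  {Gx : Matrix m ι ℝ} {cx : m → ℝ} {Ax : Matrix κ ι ℝ} {bx : κ → ℝ} {Nx : Seminorm ℝ (ι → ℝ)}
  {Gy : Matrix m ι' ℝ} {cy : m → ℝ} {Ay : Matrix κ' ι' ℝ} {by_ : κ' → ℝ}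
  {Ny : Seminorm ℝ (ι' → ℝ)}

theorem convex_iUnion_coneSlice_add :
    Convex ℝ (⋃ t, coneSlice Gx cx Ax bx Nx t + coneSlice Gy cy Ay by_ Ny (1 - t)) := by
  simp only [Convex, StarConvex, mem_iUnion, mem_add]
  rintro _ ⟨s, x, hx, y, hy, rfl⟩ _ ⟨t, x', hx', y', hy', rfl⟩ a a' ha ha' haa'
  refine ⟨a * s + a' * t, a • x + a' • x', combo_mem_coneSlice ha ha' hx hx', a • y + a' • y', ?_,
    by simp only [smul_add]; abel⟩
  convert combo_mem_coneSlice ha ha' hy hy' using 2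
  linear_combination -haa'

theorem add_mem_convexHull_union (hNx : ∀ ξ, Nx ξ = 0 → ξ = 0) (hNy : ∀ η, Ny η = 0 → η = 0)
    {t : ℝ} {x y : m → ℝ} (hx : x ∈ coneSlice Gx cx Ax bx Nx t)
    (hy : y ∈ coneSlice Gy cy Ay by_ Ny (1 - t)) :
    x + y ∈ convexHull ℝ (coneSlice Gx cx Ax bx Nx 1 ∪ coneSlice Gy cy Ay by_ Ny 1) := by
  have ht₀ := nonneg_of_mem_coneSlice hx
  have ht₁ := sub_nonneg.1 (nonneg_of_mem_coneSlice hy)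
  rcases ht₀.eq_or_lt with rfl | ht₀
  · obtain rfl := eq_zero_of_mem_coneSlice_zero hNx hx
    rw [zero_add]
    exact subset_convexHull ℝ _ (Or.inr (by simpa using hy))
  rcases ht₁.eq_or_lt with rfl | ht₁
  · obtain rfl := eq_zero_of_mem_coneSlice_zero hNy (by simpa using hy)
    rw [add_zero]
    exact subset_convexHull ℝ _ (Or.inl hx)
  have h1t : 0 < 1 - t := sub_pos.2 ht₁
  rw [← smul_inv_smul₀ ht₀.ne' x, ← smul_inv_smul₀ h1t.ne' y]
  exact convex_convexHull ℝ _
    (subset_convexHull ℝ _ (mem_union_left _ (inv_smul_mem_coneSlice_one ht₀ hx)))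
    (subset_convexHull ℝ _ (mem_union_right _ (inv_smul_mem_coneSlice_one h1t hy)))
    ht₀.le h1t.le (add_sub_cancel t 1)

theorem convexHull_union_coneSlice_one (hNx : ∀ ξ, Nx ξ = 0 → ξ = 0)
    (hNy : ∀ η, Ny η = 0 → η = 0) :
    convexHull ℝ (coneSlice Gx cx Ax bx Nx 1 ∪ coneSlice Gy cy Ay by_ Ny 1) =
      ⋃ t, coneSlice Gx cx Ax bx Nx t + coneSlice Gy cy Ay by_ Ny (1 - t) := by
  refine (convexHull_min ?_ convex_iUnion_coneSlice_add).antisymm ?_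
  · rintro z (hz | hz)
    · exact mem_iUnion.2 ⟨1, z, hz, 0, by simpa using zero_mem_coneSlice_zero, add_zero z⟩
    · exact mem_iUnion.2 ⟨0, 0, zero_mem_coneSlice_zero, z, by simpa using hz, zero_add z⟩
  · simp only [iUnion_subset_iff]
    rintro t _ ⟨x, hx, y, hy, rfl⟩
    exact add_mem_convexHull_union hNx hNy hx hy

theorem mem_iUnion_coneSlice_add_iff {z : m → ℝ} :
    z ∈ ⋃ t, coneSlice Gx cx Ax bx Nx t + coneSlice Gy cy Ay by_ Ny (1 - t) ↔
      ∃ (ξ : ι → ℝ) (η : ι' → ℝ) (ξlam : ℝ),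
        Ax *ᵥ ξ - ξlam • bx = (1/2 : ℝ) • bx ∧
        Ay *ᵥ η + ξlam • by_ = (1/2 : ℝ) • by_ ∧
        Nx ξ ≤ 1/2 + ξlam ∧ Ny η ≤ 1/2 - ξlam ∧
        z = Gx *ᵥ ξ + Gy *ᵥ η + ξlam • (cx - cy) + (1/2 : ℝ) • (cx + cy) := by
  simp only [mem_iUnion, mem_add]
  constructor
  · rintro ⟨t, _, ⟨ξ, hAξ, hNξ, rfl⟩, _, ⟨η, hAη, hNη, rfl⟩, rfl⟩
    refine ⟨ξ, η, t - 1/2, ?_, ?_, by linarith, by linarith, by module⟩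
    · linear_combination (norm := module) hAξ
    · linear_combination (norm := module) hAη
  · rintro ⟨ξ, η, l, hAξ, hAη, hNξ, hNη, rfl⟩
    refine ⟨1/2 + l, _, ⟨ξ, ?_, hNξ, rfl⟩, _, ⟨η, ?_, by linarith, rfl⟩, by module⟩
    · linear_combination (norm := module) hAξ
    · linear_combination (norm := module) hAη

end Hull

end CCG

open CCG in
theorem ccg_cvxHull_Zh_general (n ngx ncx ngy ncy : ℕ)
    (Nx : (Fin ngx → ℝ) → ℝ) (Ny : (Fin ngy → ℝ) → ℝ)
    (hNx₁ : ∀ x y, Nx (x + y) ≤ Nx x + Nx y)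
    (hNx₂ : ∀ (a : ℝ) x, Nx (a • x) = |a| * Nx x)
    (hNx₃ : ∀ x, Nx x = 0 → x = 0)
    (hNy₁ : ∀ x y, Ny (x + y) ≤ Ny x + Ny y)
    (hNy₂ : ∀ (a : ℝ) x, Ny (a • x) = |a| * Ny x)
    (hNy₃ : ∀ x, Ny x = 0 → x = 0)
    (Gx : Matrix (Fin n) (Fin ngx) ℝ) (cx : Fin n → ℝ)
    (Ax : Matrix (Fin ncx) (Fin ngx) ℝ) (bx : Fin ncx → ℝ)
    (Gy : Matrix (Fin n) (Fin ngy) ℝ) (cy : Fin n → ℝ)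
    (Ay : Matrix (Fin ncy) (Fin ngy) ℝ) (by_ : Fin ncy → ℝ)
    (X Y : Set (Fin n → ℝ))
    (hX : X = {x | ∃ ξ, Ax.mulVec ξ = bx ∧ Nx ξ ≤ 1 ∧ x = Gx.mulVec ξ + cx})
    (hY : Y = {y | ∃ η, Ay.mulVec η = by_ ∧ Ny η ≤ 1 ∧ y = Gy.mulVec η + cy}) :
    convexHull ℝ (X ∪ Y) =
      {z | ∃ (ξ : Fin ngx → ℝ) (η : Fin ngy → ℝ) (ξlam : ℝ),
        Ax.mulVec ξ - ξlam • bx = (1/2 : ℝ) • bx ∧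
        Ay.mulVec η + ξlam • by_ = (1/2 : ℝ) • by_ ∧
        Nx ξ ≤ 1/2 + ξlam ∧ Ny η ≤ 1/2 - ξlam ∧
        z = Gx.mulVec ξ + Gy.mulVec η + ξlam • (cx - cy) + (1/2 : ℝ) • (cx + cy)} := by
  let Nx' : Seminorm ℝ (Fin ngx → ℝ) := Seminorm.of Nx hNx₁ hNx₂
  let Ny' : Seminorm ℝ (Fin ngy → ℝ) := Seminorm.of Ny hNy₁ hNy₂
  have hX' : X = coneSlice Gx cx Ax bx Nx' 1 := hX.trans (coneSlice_one (N := Nx')).symm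
  have hY' : Y = coneSlice Gy cy Ay by_ Ny' 1 := hY.trans (coneSlice_one (N := Ny')).symm
  rw [hX', hY', convexHull_union_coneSlice_one (Nx := Nx') (Ny := Ny') hNx₃ hNy₃]
  ext z
  exact mem_iUnion_coneSlice_add_iff

theorem ccg_cvxHull_Zh (n ngx ncx ngy ncy : ℕ)
    (Nx : (Fin ngx → ℝ) → ℝ) (Ny : (Fin ngy → ℝ) → ℝ)
    (hNx₁ : ∀ x y, Nx (x + y) ≤ Nx x + Nx y)
    (hNx₂ : ∀ (a : ℝ) x, Nx (a • x) = |a| * Nx x)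
    (hNx₃ : ∀ x, Nx x = 0 → x = 0)
    (hNy₁ : ∀ x y, Ny (x + y) ≤ Ny x + Ny y)
    (hNy₂ : ∀ (a : ℝ) x, Ny (a • x) = |a| * Ny x)
    (hNy₃ : ∀ x, Ny x = 0 → x = 0)
    (Gx : Matrix (Fin n) (Fin ngx) ℝ) (cx : Fin n → ℝ)
    (Ax : Matrix (Fin ncx) (Fin ngx) ℝ) (bx : Fin ncx → ℝ)
    (Gy : Matrix (Fin n) (Fin ngy) ℝ) (cy : Fin n → ℝ)
    (Ay : Matrix (Fin ncy) (Fin ngy) ℝ) (by_ : Fin ncy → ℝ)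
    (X Y : Set (Fin n → ℝ))
    (hX : X = {x | ∃ ξ, Ax.mulVec ξ = bx ∧ Nx ξ ≤ 1 ∧ x = Gx.mulVec ξ + cx})
    (hY : Y = {y | ∃ η, Ay.mulVec η = by_ ∧ Ny η ≤ 1 ∧ y = Gy.mulVec η + cy})
    (hXne : X.Nonempty) (hYne : Y.Nonempty) :
    convexHull ℝ (X ∪ Y) =
      {z | ∃ (ξ : Fin ngx → ℝ) (η : Fin ngy → ℝ) (ξlam : ℝ),
        Ax.mulVec ξ - ξlam • bx = (1/2 : ℝ) • bx ∧
        Ay.mulVec η + ξlam • by_ = (1/2 : ℝ) • by_ ∧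
        Nx ξ ≤ 1/2 + ξlam ∧ Ny η ≤ 1/2 - ξlam ∧
        z = Gx.mulVec ξ + Gy.mulVec η + ξlam • (cx - cy) + (1/2 : ℝ) • (cx + cy)} :=
  ccg_cvxHull_Zh_general n ngx ncx ngy ncy Nx Ny hNx₁ hNx₂ hNx₃ hNy₁ hNy₂ hNy₃ Gx cx Ax bx Gy cy Ay
    by_ X Y hX hY
end

section
/- If x ∈ cvxHull(X ∪ Y) for nonempty convex sets X, Y ⊆ ℝⁿ, then x belongs to Z_h of the closed-form formula: there exist λ ∈ [0,1], ξ with A_x·ξ = λ·b_x, ‖ξ‖_x ≤ λ, and η with A_y·η = (1−λ)·b_y, ‖η‖_y ≤ 1−λ, such that x = G_x·ξ + λ·c_x + G_y·η + (1−λ)·c_y, where X = {G_x·ξ + c_x : A_x·ξ = b_x, ‖ξ‖_x ≤ 1} and Y = {G_y·η + c_y : A_y·η = b_y, ‖η‖_y ≤ 1}. -/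
/-!
Homogenize the generator variables: let `R.scaled t` be the set of points `G ξ + t • c` with
`A ξ = t • b` and `N ξ ≤ t`, so that `R.scaled 1` is the set itself. Since `A` is linear and `N` is
absolutely homogeneous and subadditive, `a • R.scaled s + b • R.scaled t ⊆ R.scaled (a * s + b * t)`
for `a, b ≥ 0`. Hence the union over `t ∈ [0, 1]` of `R.scaled t + S.scaled (1 - t)` is convex; it
contains `R.carrier` (at `t = 1`, with `η = 0`) and `S.carrier` (at `t = 0`), so it contains the
convex hull of their union.
-/

open Set
open scoped Pointwise

/-- Data of the constrained generator set `{G ξ + c | A ξ = b, N ξ ≤ 1}` (see `CCG.carrier`). -/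
structure CCG (E F V : Type*) [AddCommGroup E] [Module ℝ E] [AddCommGroup F] [Module ℝ F]
    [AddCommGroup V] [Module ℝ V] where
  N : Seminorm ℝ E
  A : E →ₗ[ℝ] F
  b : F
  G : E →ₗ[ℝ] V
  c : V

namespace CCG

variable {E F E' F' V : Type*} [AddCommGroup E] [Module ℝ E] [AddCommGroup F] [Module ℝ F]
  [AddCommGroup E'] [Module ℝ E'] [AddCommGroup F'] [Module ℝ F'] [AddCommGroup V] [Module ℝ V]

def carrier (R : CCG E F V) : Set V :=
  {x | ∃ ξ, R.A ξ = R.b ∧ R.N ξ ≤ 1 ∧ x = R.G ξ + R.c}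

def scaled (R : CCG E F V) (t : ℝ) : Set V :=
  {x | ∃ ξ, R.A ξ = t • R.b ∧ R.N ξ ≤ t ∧ x = R.G ξ + t • R.c}

variable (R : CCG E F V)

theorem scaled_one : R.scaled 1 = R.carrier := by
  simp only [scaled, carrier, one_smul]

theorem zero_mem_scaled_zero : (0 : V) ∈ R.scaled 0 :=
  ⟨0, by simp, by simp, by simp⟩

theorem smul_add_smul_mem_scaled {s t a b : ℝ} {x y : V} (hx : x ∈ R.scaled s)
    (hy : y ∈ R.scaled t) (ha : 0 ≤ a) (hb : 0 ≤ b) :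
    a • x + b • y ∈ R.scaled (a * s + b * t) := by
  obtain ⟨ξ, hAξ, hNξ, rfl⟩ := hx
  obtain ⟨η, hAη, hNη, rfl⟩ := hy
  refine ⟨a • ξ + b • η, ?_, ?_, ?_⟩
  · simp only [map_add, map_smul, hAξ, hAη, smul_smul, add_smul]
  · calc R.N (a • ξ + b • η) ≤ R.N (a • ξ) + R.N (b • η) := map_add_le_add _ _ _
      _ = a * R.N ξ + b * R.N η := by
        rw [map_smul_eq_mul, map_smul_eq_mul, Real.norm_of_nonneg ha, Real.norm_of_nonneg hb]
      _ ≤ a * s + b * t := by gcongr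
  · simp only [map_add, map_smul, smul_add, smul_smul, add_smul]
    abel

/-- The closed-form candidate `Z_h` for the convex hull of `R.carrier ∪ S.carrier`. -/
def hullRep (S : CCG E' F' V) : Set V :=
  ⋃ t ∈ Icc (0 : ℝ) 1, R.scaled t + S.scaled (1 - t)

variable (S : CCG E' F' V)

theorem convex_hullRep : Convex ℝ (R.hullRep S) := by
  intro z₁ hz₁ z₂ hz₂ a b ha hb hab
  simp only [hullRep, mem_iUnion₂, mem_add] at hz₁ hz₂ ⊢
  obtain ⟨t₁, ⟨ht₁, ht₁'⟩, u₁, hu₁, v₁, hv₁, rfl⟩ := hz₁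
  obtain ⟨t₂, ⟨ht₂, ht₂'⟩, u₂, hu₂, v₂, hv₂, rfl⟩ := hz₂
  have hv := S.smul_add_smul_mem_scaled hv₁ hv₂ ha hb
  rw [show a * (1 - t₁) + b * (1 - t₂) = 1 - (a * t₁ + b * t₂) by linear_combination hab] at hv
  refine ⟨a * t₁ + b * t₂, ⟨by positivity, ?_⟩, _, R.smul_add_smul_mem_scaled hu₁ hu₂ ha hb,
    _, hv, ?_⟩
  · nlinarith
  · simp only [smul_add]
    abel

theorem union_subset_hullRep : R.carrier ∪ S.carrier ⊆ R.hullRep S := by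
  rintro x (hx | hx)
  · refine mem_biUnion (x := 1) ⟨zero_le_one, le_rfl⟩ ⟨x, ?_, 0, ?_, add_zero x⟩
    · rwa [scaled_one]
    · simpa using S.zero_mem_scaled_zero
  · refine mem_biUnion (x := 0) ⟨le_rfl, zero_le_one⟩ ⟨0, R.zero_mem_scaled_zero, x, ?_, zero_add x⟩
    rwa [sub_zero, scaled_one]

theorem convexHull_union_subset_hullRep : convexHull ℝ (R.carrier ∪ S.carrier) ⊆ R.hullRep S :=
  convexHull_min (R.union_subset_hullRep S) (R.convex_hullRep S)

end CCG

theorem mem_cvxHull_imp_Zh_general (n ngx ncx ngy ncy : ℕ)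
    (Nx : (Fin ngx → ℝ) → ℝ) (Ny : (Fin ngy → ℝ) → ℝ)
    (hNx₁ : ∀ x y, Nx (x + y) ≤ Nx x + Nx y)
    (hNx₂ : ∀ (a : ℝ) x, Nx (a • x) = |a| * Nx x)
    (hNy₁ : ∀ x y, Ny (x + y) ≤ Ny x + Ny y)
    (hNy₂ : ∀ (a : ℝ) x, Ny (a • x) = |a| * Ny x)
    (Gx : Matrix (Fin n) (Fin ngx) ℝ) (cx : Fin n → ℝ)
    (Ax : Matrix (Fin ncx) (Fin ngx) ℝ) (bx : Fin ncx → ℝ)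
    (Gy : Matrix (Fin n) (Fin ngy) ℝ) (cy : Fin n → ℝ)
    (Ay : Matrix (Fin ncy) (Fin ngy) ℝ) (by_ : Fin ncy → ℝ)
    (X Y : Set (Fin n → ℝ))
    (hX : X = {x | ∃ ξ, Ax.mulVec ξ = bx ∧ Nx ξ ≤ 1 ∧ x = Gx.mulVec ξ + cx})
    (hY : Y = {y | ∃ η, Ay.mulVec η = by_ ∧ Ny η ≤ 1 ∧ y = Gy.mulVec η + cy})
    (x : Fin n → ℝ) (hx : x ∈ convexHull ℝ (X ∪ Y)) :
    ∃ lam ∈ Icc (0:ℝ) 1, ∃ ξ η,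
      Ax.mulVec ξ = lam • bx ∧ Nx ξ ≤ lam ∧
      Ay.mulVec η = (1 - lam) • by_ ∧ Ny η ≤ 1 - lam ∧
      x = Gx.mulVec ξ + lam • cx + Gy.mulVec η + (1 - lam) • cy := by
  let R : CCG (Fin ngx → ℝ) (Fin ncx → ℝ) (Fin n → ℝ) :=
    ⟨Seminorm.of Nx hNx₁ hNx₂, Ax.mulVecLin, bx, Gx.mulVecLin, cx⟩
  let S : CCG (Fin ngy → ℝ) (Fin ncy → ℝ) (Fin n → ℝ) :=
    ⟨Seminorm.of Ny hNy₁ hNy₂, Ay.mulVecLin, by_, Gy.mulVecLin, cy⟩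
  have hZ := R.convexHull_union_subset_hullRep S (hX ▸ hY ▸ hx)
  simp only [CCG.hullRep, mem_iUnion₂, mem_add] at hZ
  obtain ⟨lam, hlam, _, ⟨ξ, hAξ, hNξ, rfl⟩, _, ⟨η, hAη, hNη, rfl⟩, rfl⟩ := hZ
  exact ⟨lam, hlam, ξ, η, hAξ, hNξ, hAη, hNη, (add_assoc _ _ _).symm⟩

theorem mem_cvxHull_imp_Zh (n ngx ncx ngy ncy : ℕ)
    (Nx : (Fin ngx → ℝ) → ℝ) (Ny : (Fin ngy → ℝ) → ℝ)
    (hNx₁ : ∀ x y, Nx (x + y) ≤ Nx x + Nx y)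
    (hNx₂ : ∀ (a : ℝ) x, Nx (a • x) = |a| * Nx x)
    (hNx₃ : ∀ x, Nx x = 0 → x = 0)
    (hNy₁ : ∀ x y, Ny (x + y) ≤ Ny x + Ny y)
    (hNy₂ : ∀ (a : ℝ) x, Ny (a • x) = |a| * Ny x)
    (hNy₃ : ∀ x, Ny x = 0 → x = 0)
    (Gx : Matrix (Fin n) (Fin ngx) ℝ) (cx : Fin n → ℝ)
    (Ax : Matrix (Fin ncx) (Fin ngx) ℝ) (bx : Fin ncx → ℝ)
    (Gy : Matrix (Fin n) (Fin ngy) ℝ) (cy : Fin n → ℝ)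
    (Ay : Matrix (Fin ncy) (Fin ngy) ℝ) (by_ : Fin ncy → ℝ)
    (X Y : Set (Fin n → ℝ))
    (hX : X = {x | ∃ ξ, Ax.mulVec ξ = bx ∧ Nx ξ ≤ 1 ∧ x = Gx.mulVec ξ + cx})
    (hY : Y = {y | ∃ η, Ay.mulVec η = by_ ∧ Ny η ≤ 1 ∧ y = Gy.mulVec η + cy})
    (hXne : X.Nonempty) (hYne : Y.Nonempty)
    (x : Fin n → ℝ) (hx : x ∈ convexHull ℝ (X ∪ Y)) :
    ∃ lam ∈ Icc (0:ℝ) 1, ∃ ξ η,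
      Ax.mulVec ξ = lam • bx ∧ Nx ξ ≤ lam ∧
      Ay.mulVec η = (1 - lam) • by_ ∧ Ny η ≤ 1 - lam ∧
      x = Gx.mulVec ξ + lam • cx + Gy.mulVec η + (1 - lam) • cy :=
  mem_cvxHull_imp_Zh_general n ngx ncx ngy ncy Nx Ny hNx₁ hNx₂ hNy₁ hNy₂ Gx cx Ax bx Gy cy Ay by_ X
    Y hX hY x hx
end
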